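/- arXiv:1811.12343 — 2 statements merged into one kernel-verified Lean document; each statement's English description precedes it below -/
import Mathlib

section
/- Let n ≥ 1 and let σ be a permutation of {1,…,2n} commuting with the bar involution. For each i ≥ 1 let γ_{(i)} be half the number of σ-orbits O of cardinality i with rev(O) ≠ O (such orbits come in pairs {O, rev(O)}, so this is an integer). Let t ≥ 0 and let λ be a partition of t, with λ_{(i)} parts equal to i. Then the number of subsets K ⊆ {1,…,2n} such that K is properly admissible, σ(K) = K, and the multiset of cardinalities of the σ-orbits contained in K equals the multiset of parts of λ, is 2^{∑_{i≥1} λ_{(i)}} · ∏_{i≥1} binom(γ_{(i)}, λ_{(i)}). -/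
/-
A `σ`-invariant set `K` is the union of the `σ`-orbits it contains, and since `σ` commutes with
the bar involution, `rev` permutes the orbits. So `K` is properly admissible exactly when the set
`S` of its orbits never contains an orbit together with its reverse; in particular `S` avoids the
self-reverse orbits. This condition, and the prescribed multiset of orbit sizes, split over the
orbit sizes `i`: among the `2 γ_(i)` orbits of size `i` that are not self-reverse one must pick
`λ_(i)` of them, no two reverse to each other, i.e. choose `λ_(i)` of the `γ_(i)` pairs
`{O, rev O}` and one orbit from each, in `2 ^ λ_(i) * (γ_(i) choose λ_(i))` ways.
-/

open scoped Classical

/-- The orbit of x under the cyclic group generated by σ, as a Finset. -/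
noncomputable def orbitFinset {m : ℕ} (σ : Equiv.Perm (Fin m)) (x : Fin m) :
    Finset (Fin m) :=
  Finset.univ.filter fun y => σ.SameCycle x y

open Finset

section Fiberwise

variable {α ι : Type*} [DecidableEq ι]

theorem map_val_eq_iff_forall_card_filter {S : Finset α} {w : α → ι} {P : Multiset ι}
    {T : Finset ι} (hST : ∀ x ∈ S, w x ∈ T) (hPT : ∀ i ∈ P, i ∈ T) :
    S.val.map w = P ↔ ∀ i ∈ T, #(S.filter (w · = i)) = P.count i := by
  have hcount : ∀ i, (S.val.map w).count i = #(S.filter (w · = i)) := by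
    intro i
    simp [Multiset.count_map, Finset.card, eq_comm]
  rw [Multiset.ext]
  refine ⟨fun h i _ => by rw [← hcount, h], fun h i => ?_⟩
  by_cases hi : i ∈ T
  · rw [hcount, h i hi]
  · rw [Multiset.count_eq_zero.2 (hi ∘ hPT i), Multiset.count_eq_zero.2]
    simp only [Multiset.mem_map, mem_val, not_exists, not_and]
    exact fun x hx hxi => hi (hxi ▸ hST x hx)

theorem card_filter_powerset_forall_fiber [DecidableEq α] (s : Finset α) (f : α → ι) (t : Finset ι)
    (hf : ∀ x ∈ s, f x ∈ t) (p : ι → Finset α → Prop) [∀ i, DecidablePred (p i)] :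
    #(s.powerset.filter fun S => ∀ i ∈ t, p i (S.filter (f · = i))) =
      ∏ i ∈ t, #((s.filter (f · = i)).powerset.filter (p i)) := by
  rw [← card_pi]
  have hglue : ∀ g ∈ t.pi fun i => (s.filter (f · = i)).powerset.filter (p i),
      ∀ i (hi : i ∈ t), (s.filter fun x => ∃ h, x ∈ g (f x) h).filter (f · = i) = g i hi := by
    intro g hg i hi
    have hgi := mem_powerset.1 (mem_filter.1 (mem_pi.1 hg i hi)).1
    ext x
    simp only [mem_filter]
    constructor
    · rintro ⟨⟨-, h, hx⟩, rfl⟩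
      exact hx
    · intro hx
      obtain ⟨hxs, rfl⟩ := mem_filter.1 (hgi hx)
      exact ⟨⟨hxs, hi, hx⟩, rfl⟩
  refine card_nbij' (fun S i _ => S.filter (f · = i))
    (fun g => s.filter fun x => ∃ h, x ∈ g (f x) h) ?_ ?_ ?_ ?_
  · intro S hS
    simp only [mem_coe, mem_filter, mem_powerset, mem_pi] at hS ⊢
    exact fun i hi => ⟨filter_subset_filter _ hS.1, hS.2 i hi⟩
  · intro g hg
    simp only [mem_coe, mem_filter, mem_powerset]
    refine ⟨filter_subset _ _, fun i hi => ?_⟩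
    rw [hglue g hg i hi]
    exact (mem_filter.1 (mem_pi.1 hg i hi)).2
  · intro S hS
    have hSs := mem_powerset.1 (mem_filter.1 hS).1
    ext x
    simp only [mem_filter, and_true, exists_prop]
    exact ⟨fun h => h.2.2, fun hx => ⟨hSs hx, hf x (hSs hx), hx⟩⟩
  · intro g hg
    funext i hi
    exact hglue g hg i hi

end Fiberwise

section ProperlyAdmissible

variable {α : Type*} {I : α → α}

def ProperlyAdmissible (I : α → α) (S : Finset α) : Prop := ∀ x ∈ S, I x ∉ S

lemma ProperlyAdmissible.mono {S T : Finset α} (hT : ProperlyAdmissible I T) (hST : S ⊆ T) :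
    ProperlyAdmissible I S :=
  fun x hx hIx => hT x (hST hx) (hST hIx)

lemma ProperlyAdmissible.apply_ne {S : Finset α} (hS : ProperlyAdmissible I S) {x : α}
    (hx : x ∈ S) : I x ≠ x :=
  fun h => hS x hx (by rwa [h])

lemma properlyAdmissible_iff_forall_filter {ι : Type*} [DecidableEq ι] {S : Finset α}
    (w : α → ι) (hw : ∀ x ∈ S, w (I x) = w x) (T : Finset ι) (hST : ∀ x ∈ S, w x ∈ T) :
    ProperlyAdmissible I S ↔ ∀ i ∈ T, ProperlyAdmissible I (S.filter (w · = i)) := by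
  refine ⟨fun hS i _ => hS.mono (filter_subset _ _), fun h x hx hIx => ?_⟩
  exact h (w x) (hST x hx) x (mem_filter.2 ⟨hx, rfl⟩) (mem_filter.2 ⟨hIx, hw x hx⟩)

variable [DecidableEq α]

instance : DecidablePred (ProperlyAdmissible I) :=
  fun S => inferInstanceAs (Decidable (∀ x ∈ S, I x ∉ S))

variable (I) in
lemma card_filter_mem_properlyAdmissible_powersetCard_succ {A : Finset α}
    (hinv : ∀ x ∈ A, I (I x) = x) {e : α} (he : e ∈ A) (hIe : I e ≠ e) (k : ℕ) :
    #(((A.powersetCard (k + 1)).filter (ProperlyAdmissible I)).filter (e ∈ ·)) =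
      #(((A.erase e).erase (I e)).powersetCard k |>.filter (ProperlyAdmissible I)) := by
  refine card_nbij' (·.erase e) (insert e) ?_ ?_ ?_ ?_
  · intro S hS
    simp only [mem_coe, mem_filter, mem_powersetCard] at hS ⊢
    obtain ⟨⟨⟨hSA, hcard⟩, hS⟩, heS⟩ := hS
    refine ⟨⟨?_, by rw [card_erase_of_mem heS, hcard]; rfl⟩, hS.mono (erase_subset _ _)⟩
    intro x hx
    refine mem_erase.2 ⟨?_, erase_subset_erase _ hSA hx⟩
    rintro rfl
    exact hS e heS (mem_of_mem_erase hx)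
  · intro T hT
    simp only [mem_coe, mem_filter, mem_powersetCard] at hT ⊢
    obtain ⟨⟨hTA, hcard⟩, hT⟩ := hT
    have heT : e ∉ T := fun h => by simpa using hTA h
    have hIeT : I e ∉ T := fun h => by simpa using hTA h
    refine ⟨⟨⟨insert_subset he (hTA.trans ((erase_subset _ _).trans (erase_subset _ _))),
      by rw [card_insert_of_notMem heT, hcard]⟩, ?_⟩, mem_insert_self e T⟩
    intro x hx hIx
    rcases mem_insert.1 hx with rfl | hx
    · exact (mem_insert.1 hIx).elim hIe hIeT
    · refine (mem_insert.1 hIx).elim (fun h => hIeT ?_) (hT x hx)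
      rwa [← h, hinv x (mem_of_mem_erase (mem_of_mem_erase (hTA hx)))]
  · intro S hS
    exact insert_erase (mem_filter.1 hS).2
  · intro T hT
    refine erase_insert fun h => ?_
    simpa using (mem_powersetCard.1 (mem_filter.1 hT).1).1 h

variable (I) in
theorem card_filter_powersetCard_properlyAdmissible (A : Finset α) (hI : ∀ x ∈ A, I x ∈ A)
    (hinv : ∀ x ∈ A, I (I x) = x) (hfree : ∀ x ∈ A, I x ≠ x) (k : ℕ) :
    #((A.powersetCard k).filter (ProperlyAdmissible I)) = 2 ^ k * (#A / 2).choose k := by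
  induction A using Finset.strongInduction generalizing k with
  | H A ih =>
  rcases k with _ | k
  · simp [powersetCard_zero, filter_singleton, ProperlyAdmissible]
  rcases A.eq_empty_or_nonempty with rfl | ⟨a, ha⟩
  · simp
  set B := (A.erase a).erase (I a)
  have hIa : I a ∈ A := hI a ha
  have hIa' : I a ∈ A.erase a := mem_erase.2 ⟨hfree a ha, hIa⟩
  have hB : B ⊂ A := (erase_ssubset hIa').trans (erase_ssubset ha)
  have hIB : ∀ x ∈ B, I x ∈ B := by
    intro x hx
    simp only [B, mem_erase] at hx ⊢
    obtain ⟨hxIa, hxa, hxA⟩ := hx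
    refine ⟨fun h => hxa ?_, fun h => hxIa ?_, hI x hxA⟩
    · rw [← hinv x hxA, h, hinv a ha]
    · rw [← h, hinv x hxA]
  have ihB := ih B hB hIB (fun x hx => hinv x (hB.subset hx)) (fun x hx => hfree x (hB.subset hx))
  set F := (A.powersetCard (k + 1)).filter (ProperlyAdmissible I)
  have hwith_a := card_filter_mem_properlyAdmissible_powersetCard_succ I hinv ha (hfree a ha) k
  have hwith_Ia := card_filter_mem_properlyAdmissible_powersetCard_succ I hinv hIa (hfree _ hIa) k
  rw [hinv a ha, erase_right_comm] at hwith_Ia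
  -- An admissible `S` contains `a`, or `I a` but not `a`, or neither of them.
  have hwith_Ia_only : (F.filter (a ∉ ·)).filter (I a ∈ ·) = F.filter (I a ∈ ·) := by
    ext S
    simp only [mem_filter, and_assoc, and_congr_right_iff, and_iff_right_iff_imp]
    intro hS h
    simpa [hinv a ha] using (mem_filter.1 hS).2 _ h
  have hwithout : (F.filter (a ∉ ·)).filter (I a ∉ ·) =
      (B.powersetCard (k + 1)).filter (ProperlyAdmissible I) := by
    ext S
    simp only [F, B, mem_filter, mem_powersetCard, subset_erase]
    tauto
  have hB2 : #A / 2 = #B / 2 + 1 := by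
    have hcard : #A = #B + 2 := by rw [← card_erase_add_one ha, ← card_erase_add_one hIa']
    omega
  rw [← card_filter_add_card_filter_not (a ∈ ·),
    ← card_filter_add_card_filter_not (s := F.filter (a ∉ ·)) (I a ∈ ·),
    hwith_Ia_only, hwithout, hwith_a, hwith_Ia, ihB, ihB, hB2, Nat.choose_succ_succ, pow_succ]
  ring

theorem card_filter_properlyAdmissible_map_eq (A : Finset α) (hI : ∀ x ∈ A, I x ∈ A)
    (hinv : ∀ x ∈ A, I (I x) = x) (w : α → ℕ) (hw : ∀ x ∈ A, w (I x) = w x) {t : ℕ}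
    {P : Multiset ℕ} (hP : ∀ i ∈ P, i ≤ t) :
    #(A.powerset.filter fun S => ProperlyAdmissible I S ∧ S.val.map w = P) =
      ∏ i ∈ range (t + 1),
        2 ^ P.count i * (#(A.filter fun x => w x = i ∧ I x ≠ x) / 2).choose (P.count i) := by
  set A' := A.filter fun x => I x ≠ x
  set T := range (t + 1) ∪ A'.image w
  have hA'T : ∀ x ∈ A', w x ∈ T := fun x hx => mem_union_right _ (mem_image_of_mem w hx)
  have hPT : ∀ i ∈ P, i ∈ T := fun i hi =>
    mem_union_left _ (mem_range.2 (Nat.lt_succ_of_le (hP i hi)))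
  have hfiber : ∀ i, A'.filter (w · = i) = A.filter fun x => w x = i ∧ I x ≠ x := by
    intro i
    rw [filter_filter]
    exact filter_congr fun x _ => and_comm
  calc #(A.powerset.filter fun S => ProperlyAdmissible I S ∧ S.val.map w = P)
      = #(A'.powerset.filter fun S => ∀ i ∈ T,
          #(S.filter (w · = i)) = P.count i ∧ ProperlyAdmissible I (S.filter (w · = i))) := by
        congr 1
        ext S
        simp only [mem_filter, mem_powerset]
        constructor
        · rintro ⟨hSA, hS, hmap⟩
          have hSA' : S ⊆ A' := fun x hx => mem_filter.2 ⟨hSA hx, hS.apply_ne hx⟩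
          exact ⟨hSA', fun i hi => ⟨(map_val_eq_iff_forall_card_filter
            (fun x hx => hA'T x (hSA' hx)) hPT).1 hmap i hi, hS.mono (filter_subset _ _)⟩⟩
        · rintro ⟨hSA', h⟩
          have hSA : S ⊆ A := hSA'.trans (filter_subset _ _)
          refine ⟨hSA, (properlyAdmissible_iff_forall_filter w (fun x hx => hw x (hSA hx)) T
            (fun x hx => hA'T x (hSA' hx))).2 fun i hi => (h i hi).2,
            (map_val_eq_iff_forall_card_filter (fun x hx => hA'T x (hSA' hx)) hPT).2
              fun i hi => (h i hi).1⟩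
    _ = ∏ i ∈ T, #((A'.filter (w · = i)).powerset.filter
          fun R => #R = P.count i ∧ ProperlyAdmissible I R) :=
        card_filter_powerset_forall_fiber A' w T hA'T
          fun i R => #R = P.count i ∧ ProperlyAdmissible I R
    _ = ∏ i ∈ T,
          2 ^ P.count i * (#(A.filter fun x => w x = i ∧ I x ≠ x) / 2).choose (P.count i) := by
        refine prod_congr rfl fun i _ => ?_
        rw [← filter_filter, ← powersetCard_eq_filter, hfiber]
        refine card_filter_powersetCard_properlyAdmissible I _ (fun x hx => ?_)
          (fun x hx => hinv x (mem_filter.1 hx).1) (fun x hx => (mem_filter.1 hx).2.2) _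
        obtain ⟨hxA, rfl, hx⟩ := mem_filter.1 hx
        exact mem_filter.2 ⟨hI x hxA, hw x hxA, by rwa [hinv x hxA, ne_comm]⟩
    _ = _ := by
        refine (prod_subset subset_union_left fun i _ hi => ?_).symm
        rw [Multiset.count_eq_zero.2 fun hiP => hi (mem_range.2 (Nat.lt_succ_of_le (hP i hiP))),
          pow_zero, Nat.choose_zero_right, one_mul]

end ProperlyAdmissible

section Orbits

variable {m : ℕ} (σ : Equiv.Perm (Fin m))

@[simp]
lemma mem_orbitFinset {x y : Fin m} : y ∈ orbitFinset σ x ↔ σ.SameCycle x y := by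
  simp [orbitFinset]

lemma mem_orbitFinset_self (x : Fin m) : x ∈ orbitFinset σ x := by
  simp [Equiv.Perm.SameCycle.refl]

lemma orbitFinset_eq_of_mem {x y : Fin m} (h : y ∈ orbitFinset σ x) :
    orbitFinset σ y = orbitFinset σ x := by
  ext z
  rw [mem_orbitFinset] at h
  simp only [mem_orbitFinset]
  exact ⟨h.trans, h.symm.trans⟩

lemma image_eq_self_iff_forall_orbitFinset_subset {K : Finset (Fin m)} :
    K.image σ = K ↔ ∀ x ∈ K, orbitFinset σ x ⊆ K := by
  constructor
  · intro hK x hx y hy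
    obtain ⟨k, rfl⟩ := ((mem_orbitFinset σ).1 hy).exists_nat_pow_eq
    have hmaps : Set.MapsTo σ K K := fun z hz => hK ▸ mem_image_of_mem σ hz
    rw [Equiv.Perm.coe_pow]
    exact hmaps.iterate k hx
  · intro hK
    refine eq_of_subset_of_card_le (fun y hy => ?_) (card_image_of_injective K σ.injective).ge
    obtain ⟨x, hx, rfl⟩ := mem_image.1 hy
    exact hK x hx ((mem_orbitFinset σ).2 (Equiv.Perm.sameCycle_apply_right.2 (.refl σ x)))

lemma image_rev_orbitFinset (hσ : ∀ i, σ i.rev = (σ i).rev) (x : Fin m) :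
    (orbitFinset σ x).image Fin.rev = orbitFinset σ x.rev := by
  have hconj : Fin.revPerm * σ * Fin.revPerm⁻¹ = σ :=
    Commute.mul_inv_cancel (Equiv.ext fun i => (hσ i).symm)
  have hrev : ∀ {x y : Fin m}, σ.SameCycle x y → σ.SameCycle x.rev y.rev := fun h => by
    simpa [hconj] using h.conj (g := Fin.revPerm)
  ext y
  simp only [mem_image, mem_orbitFinset]
  refine ⟨fun ⟨z, hz, hzy⟩ => hzy ▸ hrev hz, fun h => ⟨y.rev, ?_, y.rev_rev⟩⟩
  simpa using hrev h

noncomputable def orbitFinsets : Finset (Finset (Fin m)) :=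
  univ.image fun x => orbitFinset σ x

lemma orbitFinset_mem_orbitFinsets (x : Fin m) : orbitFinset σ x ∈ orbitFinsets σ :=
  mem_image_of_mem _ (mem_univ x)

variable {σ}

lemma eq_orbitFinset_of_mem_orbitFinsets {O : Finset (Fin m)} (hO : O ∈ orbitFinsets σ)
    {x : Fin m} (hx : x ∈ O) : O = orbitFinset σ x := by
  obtain ⟨y, -, rfl⟩ := mem_image.1 hO
  exact (orbitFinset_eq_of_mem σ hx).symm

lemma nonempty_of_mem_orbitFinsets {O : Finset (Fin m)} (hO : O ∈ orbitFinsets σ) :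
    O.Nonempty := by
  obtain ⟨y, -, rfl⟩ := mem_image.1 hO
  exact ⟨y, mem_orbitFinset_self σ y⟩

lemma biUnion_filter_orbitFinsets_subset {K : Finset (Fin m)} (hK : K.image σ = K) :
    ((orbitFinsets σ).filter (· ⊆ K)).biUnion id = K := by
  ext x
  simp only [mem_biUnion, mem_filter, id]
  refine ⟨fun ⟨O, ⟨_, hOK⟩, hx⟩ => hOK hx, fun hx => ⟨_, ⟨orbitFinset_mem_orbitFinsets σ x,
    (image_eq_self_iff_forall_orbitFinset_subset σ).1 hK x hx⟩, mem_orbitFinset_self σ x⟩⟩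

lemma filter_orbitFinsets_subset_biUnion {S : Finset (Finset (Fin m))}
    (hS : S ⊆ orbitFinsets σ) : (orbitFinsets σ).filter (· ⊆ S.biUnion id) = S := by
  ext O
  simp only [mem_filter]
  refine ⟨fun ⟨hO, hOS⟩ => ?_, fun hO => ⟨hS hO, subset_biUnion_of_mem id hO⟩⟩
  obtain ⟨x, hx⟩ := nonempty_of_mem_orbitFinsets hO
  obtain ⟨O', hO', hxO'⟩ := mem_biUnion.1 (hOS hx)
  rwa [eq_orbitFinset_of_mem_orbitFinsets hO hx, ← eq_orbitFinset_of_mem_orbitFinsets (hS hO') hxO']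

lemma image_biUnion_orbitFinsets {S : Finset (Finset (Fin m))} (hS : S ⊆ orbitFinsets σ) :
    (S.biUnion id).image σ = S.biUnion id := by
  refine (image_eq_self_iff_forall_orbitFinset_subset σ).2 fun x hx => ?_
  obtain ⟨O, hO, hxO⟩ := mem_biUnion.1 hx
  rw [← eq_orbitFinset_of_mem_orbitFinsets (hS hO) hxO]
  exact subset_biUnion_of_mem id hO

lemma image_rev_mem_orbitFinsets (hσ : ∀ i, σ i.rev = (σ i).rev) {O : Finset (Fin m)}
    (hO : O ∈ orbitFinsets σ) : O.image Fin.rev ∈ orbitFinsets σ := by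
  obtain ⟨x, -, rfl⟩ := mem_image.1 hO
  rw [image_rev_orbitFinset σ hσ]
  exact orbitFinset_mem_orbitFinsets σ x.rev

lemma properlyAdmissible_filter_orbitFinsets_subset_iff (hσ : ∀ i, σ i.rev = (σ i).rev)
    {K : Finset (Fin m)} (hK : K.image σ = K) :
    ProperlyAdmissible (image Fin.rev) ((orbitFinsets σ).filter (· ⊆ K)) ↔
      ProperlyAdmissible Fin.rev K := by
  have hsub := (image_eq_self_iff_forall_orbitFinset_subset σ).1 hK
  refine ⟨fun h x hx hxr => h _ (mem_filter.2 ⟨orbitFinset_mem_orbitFinsets σ x, hsub x hx⟩) ?_,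
    fun h O hO hOr => ?_⟩
  · rw [image_rev_orbitFinset σ hσ]
    exact mem_filter.2 ⟨orbitFinset_mem_orbitFinsets σ _, hsub _ hxr⟩
  · obtain ⟨x, hx⟩ := nonempty_of_mem_orbitFinsets (mem_filter.1 hO).1
    exact h x ((mem_filter.1 hO).2 hx) ((mem_filter.1 hOr).2 (mem_image_of_mem _ hx))

theorem card_filter_invariant_properlyAdmissible (hσ : ∀ i, σ i.rev = (σ i).rev)
    (P : Multiset ℕ) :
    #(univ.filter fun K : Finset (Fin m) => (∀ i ∈ K, i.rev ∉ K) ∧ K.image σ = K ∧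
        ((orbitFinsets σ).filter (· ⊆ K)).val.map card = P) =
      #((orbitFinsets σ).powerset.filter fun S =>
        ProperlyAdmissible (image Fin.rev) S ∧ S.val.map card = P) := by
  refine card_nbij' (fun K => (orbitFinsets σ).filter (· ⊆ K)) (fun S => S.biUnion id)
    ?_ ?_ ?_ ?_
  · intro K hK
    simp only [mem_coe, mem_filter, mem_univ, true_and, mem_powerset] at hK ⊢
    obtain ⟨hadm, hK, hmap⟩ := hK
    exact ⟨filter_subset _ _,
      (properlyAdmissible_filter_orbitFinsets_subset_iff hσ hK).2 hadm, hmap⟩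
  · intro S hS
    simp only [mem_coe, mem_filter, mem_univ, true_and, mem_powerset] at hS ⊢
    obtain ⟨hS, hadm, hmap⟩ := hS
    have hK := image_biUnion_orbitFinsets hS
    rw [← filter_orbitFinsets_subset_biUnion hS] at hadm hmap
    exact ⟨(properlyAdmissible_filter_orbitFinsets_subset_iff hσ hK).1 hadm, hK, hmap⟩
  · intro K hK
    exact biUnion_filter_orbitFinsets_subset (mem_filter.1 hK).2.2.1
  · intro S hS
    exact filter_orbitFinsets_subset_biUnion (mem_powerset.1 (mem_filter.1 hS).1)

theorem stmt8_general (n : ℕ) (σ : Equiv.Perm (Fin (2 * n)))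
    (hσ : ∀ i, σ i.rev = (σ i).rev) (t : ℕ) (μ : Nat.Partition t) :
    (Finset.univ.filter fun K : Finset (Fin (2 * n)) =>
        (∀ i ∈ K, i.rev ∉ K) ∧ K.image σ = K ∧
          Multiset.map Finset.card
              ((Finset.univ.image fun x => orbitFinset σ x).filter
                (fun O => O ⊆ K)).val = μ.parts).card =
      2 ^ (∑ i ∈ Finset.range (t + 1), Multiset.count i μ.parts) *
        ∏ i ∈ Finset.range (t + 1),
          Nat.choose
            (((Finset.univ.image fun x => orbitFinset σ x).filter
                (fun O => O.card = i ∧ O.image Fin.rev ≠ O)).card / 2)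
            (Multiset.count i μ.parts) := by
  have hrev_rev (O : Finset (Fin (2 * n))) : (O.image Fin.rev).image Fin.rev = O := by
    simp [image_image, Function.comp_def]
  refine (card_filter_invariant_properlyAdmissible hσ μ.parts).trans ?_
  rw [card_filter_properlyAdmissible_map_eq (orbitFinsets σ)
    (fun O => image_rev_mem_orbitFinsets hσ) (fun O _ => hrev_rev O) card
    (fun O _ => card_image_of_injective O Fin.rev_injective) fun _ => μ.le_of_mem_parts,
    prod_mul_distrib, prod_pow_eq_pow_sum]
  rfl

theorem stmt8 (n : ℕ) (hn : 1 ≤ n) (σ : Equiv.Perm (Fin (2 * n)))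
    (hσ : ∀ i, σ i.rev = (σ i).rev) (t : ℕ) (μ : Nat.Partition t) :
    (Finset.univ.filter fun K : Finset (Fin (2 * n)) =>
        (∀ i ∈ K, i.rev ∉ K) ∧ K.image σ = K ∧
          Multiset.map Finset.card
              ((Finset.univ.image fun x => orbitFinset σ x).filter
                (fun O => O ⊆ K)).val = μ.parts).card =
      2 ^ (∑ i ∈ Finset.range (t + 1), Multiset.count i μ.parts) *
        ∏ i ∈ Finset.range (t + 1),
          Nat.choose
            (((Finset.univ.image fun x => orbitFinset σ x).filter
                (fun O => O.card = i ∧ O.image Fin.rev ≠ O)).card / 2)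
            (Multiset.count i μ.parts) :=
  stmt8_general n σ hσ t μ
end Orbits
end

section
/- Let n ≥ 1, let K ⊆ {1,…,2n} be a properly admissible subset with |K| = t (so necessarily t ≤ n), and let f : {1,…,t} → {1,…,2n} be an injective map with image K. Then there exists a permutation τ of {1,…,2n} commuting with the bar involution such that τ(j) = f(j) for all j ∈ {1,…,t}. -/
/-!
A σ-commuting permutation τ is determined by its restriction to a transversal H of σ (a set
meeting every pair {x, σ x} exactly once), and conversely any injection of H into a properly
admissible set extends to such a τ through τ (σ x) = σ (τ x). A properly admissible set extends
to a transversal, and all transversals have |α| / 2 elements, so a bijection between properly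
admissible sets extends to a bijection between transversals containing them, hence to a
σ-commuting permutation. For the bar involution the domain {1, …, t} is properly admissible
because t ≤ n.
-/

open Finset Function

variable {α : Type*} {σ : α → α}

def IsProperlyAdmissible (σ : α → α) (s : Finset α) : Prop :=
  ∀ x ∈ s, σ x ∉ s

def IsTransversal (σ : α → α) (s : Finset α) : Prop :=
  ∀ x, x ∈ s ↔ σ x ∉ s

theorem IsTransversal.isProperlyAdmissible {s : Finset α} (hs : IsTransversal σ s) :
    IsProperlyAdmissible σ s :=
  fun x hx => (hs x).1 hx

theorem IsTransversal.two_mul_card [Fintype α] (hσ : Involutive σ) {s : Finset α}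
    (hs : IsTransversal σ s) : 2 * #s = Fintype.card α := by
  classical
  have hcompl : #sᶜ = #s :=
    Finset.card_nbij' σ σ (fun x hx => by simpa [hs x, hσ x] using hx)
      (fun x hx => by simpa [hs x] using hx) (fun x _ => hσ x) (fun x _ => hσ x)
  rw [← card_add_card_compl s, hcompl, two_mul]

theorem IsProperlyAdmissible.insert [DecidableEq α] (hσ : Involutive σ) {s : Finset α}
    (hs : IsProperlyAdmissible σ s) {x : α} (hx : x ∉ s) (hσx : σ x ∉ s) (hfix : σ x ≠ x) :
    IsProperlyAdmissible σ (insert x s) := by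
  intro y hy
  rw [mem_insert] at hy ⊢
  rintro (hyx | hys)
  · rcases hy with rfl | hy
    · exact hfix hyx
    · exact hσx (hyx ▸ (hσ y).symm ▸ hy)
  · rcases hy with rfl | hy
    · exact hσx hys
    · exact hs y hy hys

theorem IsProperlyAdmissible.exists_isTransversal_superset [Fintype α] (hσ : Involutive σ)
    (hfix : ∀ x, σ x ≠ x) {s : Finset α} (hs : IsProperlyAdmissible σ s) :
    ∃ t, s ⊆ t ∧ IsTransversal σ t := by
  classical
  obtain ⟨t, ht, hmax⟩ := exists_max_image
    ((univ : Finset (Finset α)).filter fun t => s ⊆ t ∧ IsProperlyAdmissible σ t) card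
    ⟨s, by simpa using hs⟩
  simp only [mem_filter, mem_univ, true_and] at ht hmax
  refine ⟨t, ht.1, fun x => ⟨ht.2 x, fun hσx => by_contra fun hx => ?_⟩⟩
  have := hmax _ ⟨ht.1.trans (subset_insert x t), ht.2.insert hσ hx hσx (hfix x)⟩
  rw [card_insert_of_notMem hx] at this
  omega

theorem IsProperlyAdmissible.two_mul_card_le [Fintype α] (hσ : Involutive σ)
    (hfix : ∀ x, σ x ≠ x) {s : Finset α} (hs : IsProperlyAdmissible σ s) :
    2 * #s ≤ Fintype.card α := by
  obtain ⟨t, hst, ht⟩ := hs.exists_isTransversal_superset hσ hfix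
  have := Finset.card_le_card hst
  have := ht.two_mul_card hσ
  omega

theorem Finset.exists_injOn_mapsTo_eqOn_of_subset {β : Type*} {s s' : Finset α} {t : Finset β}
    {f : α → β} (hss' : s ⊆ s') (hcard : #s' = #t) (hf : Set.InjOn f s) (hft : Set.MapsTo f s t) :
    ∃ g : α → β, Set.InjOn g s' ∧ Set.MapsTo g s' t ∧ Set.EqOn g f s := by
  classical
  obtain ⟨e, he⟩ := Set.MapsTo.exists_equiv_extend_of_card_eq (α := s') (s := {x | x.1 ∈ s})
    (f := f ∘ Subtype.val) (by simpa using hcard) (fun x hx => hft hx)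
    (fun x hx y hy hxy => Subtype.ext (hf hx hy hxy))
  refine ⟨fun x => if hx : x ∈ s' then e ⟨x, hx⟩ else f x, ?_, ?_, ?_⟩
  · intro x hx y hy hxy
    simp only [mem_coe] at hx hy
    simp only [hx, hy, dite_true] at hxy
    simpa using e.injective (Subtype.ext hxy)
  · intro x hx
    simp only [mem_coe] at hx
    simp [hx]
  · intro x hx
    simp only [mem_coe] at hx
    simpa [hss' hx] using he ⟨x, hss' hx⟩ hx

theorem IsTransversal.exists_perm_commute_eqOn [Finite α] (hσ : Involutive σ) {H B : Finset α}
    (hH : IsTransversal σ H) (hB : IsProperlyAdmissible σ B) {φ : α → α} (hφ : Set.InjOn φ H)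
    (hφB : Set.MapsTo φ H B) :
    ∃ τ : Equiv.Perm α, (∀ x, τ (σ x) = σ (τ x)) ∧ Set.EqOn τ φ H := by
  classical
  have hσH : ∀ x, x ∉ H → σ x ∈ H := fun x hx => by rwa [hH, hσ]
  let g x := if x ∈ H then φ x else σ (φ (σ x))
  have hg_mem : ∀ x ∈ H, g x = φ x := fun x hx => if_pos hx
  have hg_notMem : ∀ x ∉ H, g x = σ (φ (σ x)) := fun x hx => if_neg hx
  have hgB : ∀ x, g x ∈ B ↔ x ∈ H := by
    intro x
    by_cases hx : x ∈ H
    · simpa [hg_mem x hx, hx] using hφB hx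
    · simpa [hg_notMem x hx, hx] using hB _ (hφB (hσH x hx))
  have hg_inj : Injective g := by
    intro x y hxy
    have hxy' : x ∈ H ↔ y ∈ H := (hgB x).symm.trans (hxy ▸ hgB y)
    by_cases hx : x ∈ H
    · rw [hg_mem x hx, hg_mem y (hxy'.1 hx)] at hxy
      exact hφ hx (hxy'.1 hx) hxy
    · have hy : y ∉ H := fun hy => hx (hxy'.2 hy)
      rw [hg_notMem x hx, hg_notMem y hy] at hxy
      exact hσ.injective (hφ (hσH x hx) (hσH y hy) (hσ.injective hxy))
  refine ⟨Equiv.ofBijective g (Finite.injective_iff_bijective.mp hg_inj), fun x => ?_, hg_mem⟩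
  simp only [Equiv.ofBijective_apply]
  by_cases hx : x ∈ H
  · rw [hg_notMem _ ((hH x).1 hx), hσ x, hg_mem x hx]
  · rw [hg_mem _ (hσH x hx), hg_notMem x hx, hσ]

theorem IsProperlyAdmissible.exists_perm_commute_eqOn [Fintype α] (hσ : Involutive σ)
    (hfix : ∀ x, σ x ≠ x) {A B : Finset α} (hA : IsProperlyAdmissible σ A)
    (hB : IsProperlyAdmissible σ B) {f : α → α} (hf : Set.InjOn f A) (hfAB : Set.MapsTo f A B) :
    ∃ τ : Equiv.Perm α, (∀ x, τ (σ x) = σ (τ x)) ∧ Set.EqOn τ f A := by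
  obtain ⟨A', hAA', hA'⟩ := hA.exists_isTransversal_superset hσ hfix
  obtain ⟨B', hBB', hB'⟩ := hB.exists_isTransversal_superset hσ hfix
  have hcard : #A' = #B' := by
    have := hA'.two_mul_card hσ
    have := hB'.two_mul_card hσ
    omega
  obtain ⟨φ, hφ, hφB', hφf⟩ :=
    exists_injOn_mapsTo_eqOn_of_subset hAA' hcard hf (hfAB.mono_right (coe_subset.2 hBB'))
  obtain ⟨τ, hτσ, hτφ⟩ := hA'.exists_perm_commute_eqOn hσ hB'.isProperlyAdmissible hφ hφB'
  exact ⟨τ, hτσ, (hτφ.mono (coe_subset.2 hAA')).trans hφf⟩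

theorem Fin.rev_ne_self_of_even {m : ℕ} (i : Fin (2 * m)) : i.rev ≠ i := by
  rw [Ne, Fin.ext_iff, Fin.val_rev]
  omega

theorem Fin.isProperlyAdmissible_rev_filter_val_lt {n t : ℕ} (htn : t ≤ n) :
    IsProperlyAdmissible Fin.rev (univ.filter fun x : Fin (2 * n) => (x : ℕ) < t) := by
  intro x hx
  simp only [mem_filter, mem_univ, true_and, Fin.val_rev] at hx ⊢
  omega

theorem stmt12_general (n t : ℕ) (K : Finset (Fin (2 * n)))
    (hK : ∀ i ∈ K, i.rev ∉ K) (hcard : K.card = t)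
    (f : Fin t → Fin (2 * n)) (hf : Function.Injective f)
    (him : Finset.univ.image f = K) :
    ∃ τ : Equiv.Perm (Fin (2 * n)),
      (∀ i, τ i.rev = (τ i).rev) ∧
        ∀ (x : Fin (2 * n)) (j : Fin t), (x : ℕ) = (j : ℕ) → τ x = f j := by
  have htn : t ≤ n := by
    have := IsProperlyAdmissible.two_mul_card_le Fin.rev_involutive Fin.rev_ne_self_of_even hK
    rw [hcard, Fintype.card_fin] at this
    omega
  let f' : Fin (2 * n) → Fin (2 * n) := fun x => if hx : (x : ℕ) < t then f ⟨x, hx⟩ else x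
  have hf' : ∀ (x : Fin (2 * n)) (hx : (x : ℕ) < t), f' x = f ⟨x, hx⟩ := fun x hx => dif_pos hx
  obtain ⟨τ, hτ, hτf⟩ := (Fin.isProperlyAdmissible_rev_filter_val_lt htn).exists_perm_commute_eqOn
    Fin.rev_involutive Fin.rev_ne_self_of_even (f := f') hK
    (fun x hx y hy hxy => by
      simp only [coe_filter, mem_univ, true_and, Set.mem_ofPred_eq] at hx hy
      rw [hf' x hx, hf' y hy] at hxy
      exact Fin.ext (Fin.mk.inj_iff.1 (hf hxy)))
    (fun x hx => by
      simp only [coe_filter, mem_univ, true_and, Set.mem_ofPred_eq] at hx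
      simp [hf' x hx, ← him])
  refine ⟨τ, hτ, fun x j hxj => ?_⟩
  have hx : (x : ℕ) < t := hxj ▸ j.isLt
  rw [hτf (by simpa using hx), hf' x hx]
  congr

theorem stmt12 (n t : ℕ) (hn : 1 ≤ n) (K : Finset (Fin (2 * n)))
    (hK : ∀ i ∈ K, i.rev ∉ K) (hcard : K.card = t)
    (f : Fin t → Fin (2 * n)) (hf : Function.Injective f)
    (him : Finset.univ.image f = K) :
    ∃ τ : Equiv.Perm (Fin (2 * n)),
      (∀ i, τ i.rev = (τ i).rev) ∧
        ∀ (x : Fin (2 * n)) (j : Fin t), (x : ℕ) = (j : ℕ) → τ x = f j :=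
  stmt12_general n t K hK hcard f hf him
end
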